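/- Let q be a prime power, n ≥ 2, and ℓ a prime dividing neither q nor q−1 (equivalently ℓ ∤ q and d_ℓ(q) > 1). Let k be an algebraically closed field of characteristic ℓ. If M is an indecomposable endotrivial k[GL_n(F_q)]-module whose restriction to SL_n(F_q) is isomorphic to the direct sum of the trivial module k and a projective k[SL_n(F_q)]-module, then dim_k M = 1. -/

import Mathlib

universe u

/-- A finite-dimensional `kG`-module `V` (given as a representation `ρ`) is *endotrivial*
if `V ⊗ V* ≅ k ⊕ P` as `kG`-modules, with `P` a projective `kG`-module. -/
def Representation.IsEndotrivial {k G : Type*} {V : Type u} [Field k] [Group G]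
    [AddCommGroup V] [Module k V] (ρ : Representation k G V) : Prop :=
  ∃ (P : Type u) (_ : AddCommGroup P) (_ : Module k P) (π : Representation k G P),
    Module.Projective (MonoidAlgebra k G) π.asModule ∧
    ∃ e : TensorProduct k V (Module.Dual k V) ≃ₗ[k] k × P,
      ∀ (g : G) (x : TensorProduct k V (Module.Dual k V)),
        e ((ρ.tprod ρ.dual) g x) = ((e x).1, π g (e x).2)

/-- A `kG`-module is *indecomposable* if it is nonzero and is not the (internal) direct sum
of two nonzero submodules. -/
def Representation.IsIndecomposable {k G : Type*} {V : Type u} [Field k] [Group G]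
    [AddCommGroup V] [Module k V] (ρ : Representation k G V) : Prop :=
  Nontrivial V ∧ ∀ W₁ W₂ : Submodule (MonoidAlgebra k G) ρ.asModule,
    IsCompl W₁ W₂ → W₁ = ⊥ ∨ W₂ = ⊥

/-!
The determinant identifies `GLₙ(q) / SLₙ(q)` with the cyclic group `F_qˣ` of order `q - 1`,
which is invertible in `k`. The trivial summand of `M` restricted to `SLₙ(q)` provides an
`SLₙ(q)`-fixed vector `x` and an `SLₙ(q)`-invariant functional `λ` with `λ x ≠ 0`. If `g₀ ∈ GLₙ(q)`
has determinant generating `F_qˣ`, the eigenprojections `∑ₘ ζᵐ g₀ᵐ` of `⟨g₀⟩` (for `ζ` running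
over the `(q - 1)`-th roots of unity) turn these into a vector `v` spanning a `GLₙ(q)`-stable line
and a functional `μ` with `GLₙ(q)`-stable kernel, still with `μ v ≠ 0`. Then `M = k v ⊕ ker μ` as
`k[GLₙ(q)]`-modules, and indecomposability forces `M = k v`.
-/

open Finset Module

theorem IsPrimitiveRoot.sum_range_pow_pow {k : Type*} [CommRing k] [IsDomain k] {ω : k}
    {N m : ℕ} (hω : IsPrimitiveRoot ω N) (hm : m < N) :
    ∑ j ∈ range N, (ω ^ j) ^ m = if m = 0 then (N : k) else 0 := by
  split_ifs with h
  · simp [h]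
  · have hgeom := mul_geom_sum (ω ^ m) N
    rw [show (ω ^ m) ^ N = 1 by rw [pow_right_comm, hω.pow_eq_one, one_pow], sub_self] at hgeom
    simp_rw [← pow_mul, mul_comm _ m, pow_mul]
    exact (mul_eq_zero.mp hgeom).resolve_left
      (sub_ne_zero.mpr (hω.pow_ne_one_of_pos_of_lt h hm))

namespace Representation

variable {k G V : Type*} [Field k] [Group G] [AddCommGroup V] [Module k V]
  {ρ : Representation k G V}

theorem apply_pow_eq_pow_smul {g : G} {v : V} {c : k} (hv : ρ g v = c • v) (m : ℕ) :
    ρ (g ^ m) v = c ^ m • v := by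
  induction m with
  | zero => simp
  | succ m ih =>
    rw [pow_succ, map_mul, Module.End.mul_apply, hv, map_smul, ih, smul_smul, pow_succ']

theorem apply_eq_pow_smul_of_mem_invariants {S : Subgroup G} {g₀ g : G} {m : ℕ}
    (hg : g * (g₀ ^ m)⁻¹ ∈ S) {v : V} (hv : v ∈ invariants (ρ.comp S.subtype)) {c : k}
    (hc : ρ g₀ v = c • v) : ρ g v = c ^ m • v := by
  rw [show g = g * (g₀ ^ m)⁻¹ * g₀ ^ m by group, map_mul, Module.End.mul_apply,
    apply_pow_eq_pow_smul hc, map_smul]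
  exact congr_arg _ (hv ⟨_, hg⟩)

theorem dual_apply_apply (g : G) (μ : Dual k V) (v : V) : ρ.dual g μ (ρ g v) = μ v := by
  simp [dual_apply, Dual.transpose_apply, ← Module.End.mul_apply, ← map_mul]

/-- Up to the factor `N`, the projection of `x` onto the `ζ⁻¹`-eigenspace of `ρ g`, when
`ρ (g ^ N) x = x` and `ζ ^ N = 1`. -/
def twistedOrbitSum (ρ : Representation k G V) (g : G) (ζ : k) (N : ℕ) (x : V) : V :=
  ∑ m ∈ range N, ζ ^ m • ρ (g ^ m) x

variable {g : G} {ζ : k} {N : ℕ} {x : V}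

theorem apply_twistedOrbitSum (hx : ρ (g ^ N) x = x) (hζ : ζ ^ N = 1) :
    ρ g (ρ.twistedOrbitSum g ζ N x) = ζ⁻¹ • ρ.twistedOrbitSum g ζ N x := by
  rcases eq_or_ne ζ 0 with rfl | hζ0
  · obtain rfl : N = 0 := by by_contra hN; simp [zero_pow hN] at hζ
    simp [twistedOrbitSum]
  rw [eq_inv_smul_iff₀ hζ0]
  set f : ℕ → V := fun m ↦ ζ ^ m • ρ (g ^ m) x
  have hshift : ∑ m ∈ range N, f (m + 1) + f 0 = ∑ m ∈ range N, f m + f N := by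
    rw [← sum_range_succ', sum_range_succ]
  have hperiodic : f N = f 0 := by
    simp only [f, hζ, hx, pow_zero, one_smul, map_one, Module.End.one_apply]
  calc ζ • ρ g (ρ.twistedOrbitSum g ζ N x) = ∑ m ∈ range N, f (m + 1) := by
        simp [f, twistedOrbitSum, smul_sum, smul_smul, pow_succ', ← Module.End.mul_apply]
    _ = ρ.twistedOrbitSum g ζ N x := by rw [hperiodic] at hshift; exact add_right_cancel hshift

theorem sum_twistedOrbitSum_pow {ω : k} (hω : IsPrimitiveRoot ω N) :
    ∑ j ∈ range N, ρ.twistedOrbitSum g (ω ^ j) N x = (N : k) • x := by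
  simp only [twistedOrbitSum]
  rw [sum_comm]
  simp_rw [← sum_smul]
  rw [sum_congr rfl fun m hm ↦ by rw [hω.sum_range_pow_pow (mem_range.mp hm)]]
  simp only [ite_smul, zero_smul, sum_ite_eq', mem_range]
  split_ifs with hN <;> simp_all

theorem apply_twistedOrbitSum_of_dual_apply_eq_smul {μ : Dual k V} (hμ : ρ.dual g μ = ζ • μ) :
    μ (ρ.twistedOrbitSum g ζ N x) = N * μ x := by
  have hpow (m : ℕ) : ζ ^ m * μ (ρ (g ^ m) x) = μ x := by
    rw [← smul_eq_mul, ← LinearMap.smul_apply, ← apply_pow_eq_pow_smul hμ, dual_apply_apply]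
  simp only [twistedOrbitSum, map_sum, map_smul, smul_eq_mul, hpow, sum_const, card_range,
    nsmul_eq_mul]

theorem twistedOrbitSum_mem_invariants {S : Subgroup G} [S.Normal]
    (hx : x ∈ invariants (ρ.comp S.subtype)) :
    ρ.twistedOrbitSum g ζ N x ∈ invariants (ρ.comp S.subtype) :=
  Submodule.sum_mem _ fun _ _ ↦ Submodule.smul_mem _ _ (ρ.le_comap_invariants S _ hx)

namespace IsIndecomposable

theorem eq_bot_or_eq_bot (h : IsIndecomposable ρ) {p q : Submodule k V}
    (hp : p ∈ ρ.invtSubmodule) (hq : q ∈ ρ.invtSubmodule) (hpq : IsCompl p q) :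
    p = ⊥ ∨ q = ⊥ := by
  have hcompl : IsCompl (⟨p, hp⟩ : ρ.invtSubmodule) ⟨q, hq⟩ := by
    rw [isCompl_iff, disjoint_iff, codisjoint_iff] at hpq ⊢
    exact ⟨Subtype.ext hpq.1, Subtype.ext hpq.2⟩
  simpa [map_eq_bot_iff, ← Subtype.coe_inj] using h.2 _ _ (ρ.mapSubmodule.isCompl hcompl)

variable [FiniteDimensional k V]

theorem finrank_eq_one_of_eigenvectors (h : IsIndecomposable ρ) {v : V} {μ : Dual k V}
    (hμv : μ v ≠ 0) (hv : ∀ g, ∃ c : k, ρ g v = c • v) (hμ : ∀ g, ∃ c : k, ρ.dual g μ = c • μ) :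
    finrank k V = 1 := by
  have hv0 : v ≠ 0 := by rintro rfl; simp at hμv
  have hμ0 : μ ≠ 0 := by rintro rfl; simp at hμv
  have hcompl : IsCompl (LinearMap.ker μ) (k ∙ v) :=
    Dual.isCompl_ker_of_disjoint_of_ne_bot hμ0
      ((Submodule.disjoint_span_singleton' hv0).mpr hμv) (by simpa using hv0)
  have hker : LinearMap.ker μ ∈ ρ.invtSubmodule := by
    refine ρ.mem_invtSubmodule.mpr fun g y hy ↦ ?_
    obtain ⟨c, hc⟩ := hμ g⁻¹
    have hμg : μ (ρ g y) = c * μ y := by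
      simpa [dual_apply, Dual.transpose_apply] using congr($hc y)
    rw [Submodule.mem_comap, LinearMap.mem_ker, hμg, LinearMap.mem_ker.mp hy, mul_zero]
  have hline : (k ∙ v) ∈ ρ.invtSubmodule := by
    refine ρ.mem_invtSubmodule.mpr fun g y hy ↦ ?_
    obtain ⟨a, rfl⟩ := Submodule.mem_span_singleton.mp hy
    obtain ⟨c, hc⟩ := hv g
    simp [hc, Submodule.smul_mem, Submodule.mem_span_singleton_self]
  rcases h.eq_bot_or_eq_bot hker hline hcompl with hker | hline
  · rw [← finrank_top, ← eq_top_of_isCompl_bot (hker ▸ hcompl).symm, finrank_span_singleton hv0]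
  · simp [hv0] at hline

theorem finrank_eq_one_of_mem_invariants (h : IsIndecomposable ρ) {S : Subgroup G} [S.Normal]
    {g₀ : G} (hgen : ∀ g, ∃ m : ℕ, g * (g₀ ^ m)⁻¹ ∈ S) (hg₀ : g₀ ^ N ∈ S) (hN : (N : k) ≠ 0)
    {ω : k} (hω : IsPrimitiveRoot ω N) (hx : x ∈ invariants (ρ.comp S.subtype))
    {lam : Dual k V} (hlam : lam ∈ invariants (ρ.dual.comp S.subtype)) (hlx : lam x ≠ 0) :
    finrank k V = 1 := by
  obtain ⟨j, -, hj⟩ : ∃ j ∈ range N, ρ.dual.twistedOrbitSum g₀ (ω ^ j) N lam x ≠ 0 := by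
    refine exists_ne_zero_of_sum_ne_zero ?_
    rw [← LinearMap.sum_apply, sum_twistedOrbitSum_pow hω]
    simpa using mul_ne_zero hN hlx
  set ζ := ω ^ j
  have hζ : ζ ^ N = 1 := by rw [pow_right_comm, hω.pow_eq_one, one_pow]
  set μ := ρ.dual.twistedOrbitSum g₀ ζ N lam
  set v := ρ.twistedOrbitSum g₀ ζ⁻¹ N x
  have hμ : ρ.dual g₀ μ = ζ⁻¹ • μ := apply_twistedOrbitSum (hlam ⟨_, hg₀⟩) hζ
  have hv : ρ g₀ v = ζ • v := by
    rw [← inv_inv ζ]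
    exact apply_twistedOrbitSum (hx ⟨_, hg₀⟩) (by rw [inv_pow, hζ, inv_one])
  refine h.finrank_eq_one_of_eigenvectors (v := v) (μ := μ) ?_ (fun g ↦ ?_) (fun g ↦ ?_)
  · rw [apply_twistedOrbitSum_of_dual_apply_eq_smul hμ]
    exact mul_ne_zero hN hj
  all_goals obtain ⟨m, hm⟩ := hgen g
  · exact ⟨_, apply_eq_pow_smul_of_mem_invariants hm (twistedOrbitSum_mem_invariants hx) hv⟩
  · exact ⟨_, apply_eq_pow_smul_of_mem_invariants hm (twistedOrbitSum_mem_invariants hlam) hμ⟩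

theorem finrank_eq_one_of_mem_invariants_ker (h : IsIndecomposable ρ) {C : Type*} [Group C]
    [Finite C] [IsCyclic C] {φ : G →* C} (hφ : Function.Surjective φ)
    (hC : (Nat.card C : k) ≠ 0) [HasEnoughRootsOfUnity k (Nat.card C)]
    (hx : x ∈ invariants (ρ.comp φ.ker.subtype)) {lam : Dual k V}
    (hlam : lam ∈ invariants (ρ.dual.comp φ.ker.subtype)) (hlx : lam x ≠ 0) :
    finrank k V = 1 := by
  obtain ⟨u, hu⟩ := IsCyclic.exists_monoid_generator (α := C)
  obtain ⟨g₀, rfl⟩ := hφ u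
  obtain ⟨ω, hω⟩ := HasEnoughRootsOfUnity.exists_primitiveRoot k (Nat.card C)
  refine h.finrank_eq_one_of_mem_invariants (g₀ := g₀) (fun g ↦ ?_) ?_ hC hω hx hlam hlx
  · obtain ⟨m, hm⟩ := hu (φ g)
    exact ⟨m, by simp [MonoidHom.mem_ker, hm]⟩
  · simp [MonoidHom.mem_ker, pow_card_eq_one']

end IsIndecomposable

end Representation

theorem endotrivial_GL_trivial_restriction_dim_one_general
    {ℓ q n : ℕ} (hn : 2 ≤ n)
    (hℓq1 : ¬ ℓ ∣ (q - 1))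
    (F : Type*) [Field F] [Fintype F] (hF : Fintype.card F = q)
    (k : Type*) [Field k] [IsAlgClosed k] [CharP k ℓ]
    (V : Type u) [AddCommGroup V] [Module k V] [FiniteDimensional k V]
    (ρ : Representation k (Matrix.GeneralLinearGroup (Fin n) F) V)
    (hindec : ρ.IsIndecomposable)
    (hres : ∃ (P : Type u) (_ : AddCommGroup P) (_ : Module k P)
      (π : Representation k (Matrix.SpecialLinearGroup (Fin n) F) P),
      Module.Projective (MonoidAlgebra k (Matrix.SpecialLinearGroup (Fin n) F)) π.asModule ∧
      ∃ e : V ≃ₗ[k] k × P, ∀ (g : Matrix.SpecialLinearGroup (Fin n) F) (v : V),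
        e ((ρ.comp Matrix.SpecialLinearGroup.toGL) g v) = ((e v).1, π g (e v).2)) :
    Module.finrank k V = 1 := by
  obtain ⟨P, _, _, π, -, e, he⟩ := hres
  have : Nonempty (Fin n) := ⟨⟨0, by omega⟩⟩
  have hC : (Nat.card Fˣ : k) ≠ 0 := by
    rwa [Nat.card_units, Nat.card_eq_fintype_card, hF, Ne, CharP.cast_eq_zero_iff k ℓ]
  have : NeZero (Nat.card Fˣ : k) := ⟨hC⟩
  have hSL (s : Matrix.GeneralLinearGroup (Fin n) F)
      (hs : s ∈ Matrix.GeneralLinearGroup.det.ker) :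
      ∃ t : Matrix.SpecialLinearGroup (Fin n) F, Matrix.SpecialLinearGroup.toGL t = s :=
    ⟨⟨s, by simpa [Units.ext_iff] using hs⟩, Units.ext rfl⟩
  refine hindec.finrank_eq_one_of_mem_invariants_ker Matrix.GeneralLinearGroup.det_surjective hC
    (x := e.symm (1, 0)) (lam := LinearMap.fst k k P ∘ₗ e) ?_ ?_ (by simp)
  · rintro ⟨s, hs⟩
    obtain ⟨t, rfl⟩ := hSL s hs
    exact e.injective (by simpa using he t (e.symm (1, 0)))
  · rintro ⟨s, hs⟩
    obtain ⟨t, rfl⟩ := hSL s hs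
    ext y
    simpa [Representation.dual_apply, Dual.transpose_apply] using
      congr_arg Prod.fst (he t⁻¹ y)

/-- **(From Corollary 3.9.)** Let `ℓ` be a prime dividing neither `q` nor `q − 1`. If `M` is
an indecomposable endotrivial `k[GLₙ(q)]`-module whose restriction to `SLₙ(q)` is the direct
sum of the trivial module and a projective module, then `M` is one-dimensional. -/
theorem endotrivial_GL_trivial_restriction_dim_one
    {ℓ q n : ℕ} (hℓ : ℓ.Prime) (hq : IsPrimePow q) (hn : 2 ≤ n)
    (hℓq : ¬ ℓ ∣ q) (hℓq1 : ¬ ℓ ∣ (q - 1))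
    (F : Type*) [Field F] [Fintype F] (hF : Fintype.card F = q)
    (k : Type*) [Field k] [IsAlgClosed k] [CharP k ℓ]
    (V : Type u) [AddCommGroup V] [Module k V] [FiniteDimensional k V]
    (ρ : Representation k (Matrix.GeneralLinearGroup (Fin n) F) V)
    (hindec : ρ.IsIndecomposable) (hendo : ρ.IsEndotrivial)
    (hres : ∃ (P : Type u) (_ : AddCommGroup P) (_ : Module k P)
      (π : Representation k (Matrix.SpecialLinearGroup (Fin n) F) P),
      Module.Projective (MonoidAlgebra k (Matrix.SpecialLinearGroup (Fin n) F)) π.asModule ∧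
      ∃ e : V ≃ₗ[k] k × P, ∀ (g : Matrix.SpecialLinearGroup (Fin n) F) (v : V),
        e ((ρ.comp Matrix.SpecialLinearGroup.toGL) g v) = ((e v).1, π g (e v).2)) :
    Module.finrank k V = 1 :=
  endotrivial_GL_trivial_restriction_dim_one_general hn hℓq1 F hF k V ρ hindec hres
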